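/- Let u, z ∈ Ω_+ and, for α > 0, set x̃_α = (P((u + e/α)^{1/2})(z + u + e/α))^{1/2} and x_α = (P((u + e/α)^{−1/2}) x̃_α)² − e. Then x_α/α converges to z as α → 0⁺. -/

import Mathlib

/-!
For `α > 0` put `K = e + α u` and `L = e + α (z + u)`, so that `u + e/α = K/α` and
`z + u + e/α = L/α`. The matrix `Y = P((u + e/α)^{-1/2}) x̃_α` is the positive solution of the
Riccati equation `Y K Y = L`. This solution is invariant under rescaling `K` and `L` by the same
factor, and it depends continuously on `(K, L)`, so `Y → e` as `α → 0⁺`. Expanding `Y K Y = L`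
gives `x_α / α = (Y² - e) / α = z + u - Y u Y`, which tends to `z`.
-/

open Matrix Filter Topology

abbrev Mat (r : ℕ) : Type := Matrix (Fin r) (Fin r) ℝ

open Classical in
/-- the square root of a positive semidefinite matrix (junk value `0` otherwise) -/
noncomputable def msqrt {r : ℕ} (x : Mat r) : Mat r :=
  if h : x.PosSemidef then
    (h.1.eigenvectorUnitary : Mat r) * diagonal ((↑) ∘ (√·) ∘ h.1.eigenvalues) *
      (star h.1.eigenvectorUnitary : Mat r)
  else 0

open scoped MatrixOrder

namespace Matrix

lemma posDef_one_add_smul {n : Type*} [DecidableEq n] {A : Matrix n n ℝ} (hA : A.PosSemidef)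
    {c : ℝ} (hc : 0 ≤ c) : (1 + c • A).PosDef :=
  PosDef.one.add_posSemidef (hA.smul hc)

variable {n : Type*} [Fintype n] [DecidableEq n]

noncomputable def riccatiSolution (K L : Matrix n n ℝ) : Matrix n n ℝ :=
  (CFC.sqrt K)⁻¹ * CFC.sqrt (CFC.sqrt K * L * CFC.sqrt K) * (CFC.sqrt K)⁻¹

lemma isUnit_det_sqrt {K : Matrix n n ℝ} (hK : K.PosDef) : IsUnit (CFC.sqrt K).det :=
  (isUnit_iff_isUnit_det _).1 <| (CFC.isUnit_sqrt_iff K hK.posSemidef.nonneg).2 hK.isUnit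

lemma sqrt_mul_mul_sqrt_nonneg (K : Matrix n n ℝ) {L : Matrix n n ℝ} (hL : 0 ≤ L) :
    0 ≤ CFC.sqrt K * L * CFC.sqrt K :=
  conjugate_nonneg_of_nonneg hL (CFC.sqrt_nonneg K)

lemma riccatiSolution_nonneg (K L : Matrix n n ℝ) : 0 ≤ riccatiSolution K L :=
  (CFC.sqrt_nonneg K).isSelfAdjoint.isHermitian.inv.isSelfAdjoint.conjugate_nonneg
    (CFC.sqrt_nonneg _)

lemma riccatiSolution_mul_mul_self {K L : Matrix n n ℝ} (hK : K.PosDef) (hL : 0 ≤ L) :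
    riccatiSolution K L * K * riccatiSolution K L = L := by
  have hk := isUnit_det_sqrt hK
  have hkk : CFC.sqrt K * CFC.sqrt K = K := CFC.sqrt_mul_sqrt_self K hK.posSemidef.nonneg
  have hmm := CFC.sqrt_mul_sqrt_self _ (sqrt_mul_mul_sqrt_nonneg K hL)
  set k := CFC.sqrt K
  set m := CFC.sqrt (k * L * k)
  have h1 : k⁻¹ * k = 1 := nonsing_inv_mul k hk
  have h2 : k * k⁻¹ = 1 := mul_nonsing_inv k hk
  calc k⁻¹ * m * k⁻¹ * K * (k⁻¹ * m * k⁻¹)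
      = k⁻¹ * m * (k⁻¹ * k) * (k * k⁻¹) * m * k⁻¹ := by rw [← hkk]; noncomm_ring
    _ = k⁻¹ * (m * m) * k⁻¹ := by rw [h1, h2]; noncomm_ring
    _ = (k⁻¹ * k) * L * (k * k⁻¹) := by rw [hmm]; noncomm_ring
    _ = L := by rw [h1, h2, one_mul, mul_one]

lemma eq_riccatiSolution {K L Y : Matrix n n ℝ} (hK : K.PosDef) (hY : 0 ≤ Y)
    (h : Y * K * Y = L) : Y = riccatiSolution K L := by
  have hk := isUnit_det_sqrt hK
  have hkk : CFC.sqrt K * CFC.sqrt K = K := CFC.sqrt_mul_sqrt_self K hK.posSemidef.nonneg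
  have hkYk := conjugate_nonneg_of_nonneg hY (CFC.sqrt_nonneg K)
  set k := CFC.sqrt K
  have hm : CFC.sqrt (k * L * k) = k * Y * k := by
    refine CFC.sqrt_unique ?_ hkYk
    rw [← h, ← hkk]; noncomm_ring
  calc Y = (k⁻¹ * k) * Y * (k * k⁻¹) := by rw [nonsing_inv_mul k hk, mul_nonsing_inv k hk]; simp
    _ = riccatiSolution K L := by rw [riccatiSolution, hm]; noncomm_ring

lemma riccatiSolution_smul {K L : Matrix n n ℝ} (hK : K.PosDef) (hL : 0 ≤ L) {c : ℝ}
    (hc : 0 < c) : riccatiSolution (c • K) (c • L) = riccatiSolution K L := by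
  refine (eq_riccatiSolution (hK.smul hc) (riccatiSolution_nonneg K L) ?_).symm
  rw [mul_smul_comm, smul_mul_assoc, riccatiSolution_mul_mul_self hK hL]

@[simp]
lemma riccatiSolution_one : riccatiSolution (1 : Matrix n n ℝ) 1 = 1 := by
  simp [riccatiSolution, CFC.sqrt_one]

variable {ι : Type*} {l : Filter ι}

-- The L2 operator norm makes `Matrix n n ℝ` a C⋆-ring without changing its topology.
open scoped Matrix.Norms.L2Operator in
lemma _root_.Filter.Tendsto.matrix_sqrt {K : ι → Matrix n n ℝ} {K₀ : Matrix n n ℝ}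
    (hK : Tendsto K l (𝓝 K₀)) (hK₀ : 0 ≤ K₀) (hKn : ∀ᶠ t in l, 0 ≤ K t) :
    Tendsto (fun t => CFC.sqrt (K t)) l (𝓝 (CFC.sqrt K₀)) :=
  (CFC.continuousOn_sqrt K₀ hK₀).tendsto.comp (tendsto_nhdsWithin_iff.2 ⟨hK, hKn⟩)

lemma _root_.Filter.Tendsto.matrix_riccatiSolution {K L : ι → Matrix n n ℝ}
    {K₀ L₀ : Matrix n n ℝ} (hK : Tendsto K l (𝓝 K₀)) (hL : Tendsto L l (𝓝 L₀))
    (hK₀ : K₀.PosDef) (hL₀ : 0 ≤ L₀) (hKn : ∀ᶠ t in l, 0 ≤ K t) (hLn : ∀ᶠ t in l, 0 ≤ L t) :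
    Tendsto (fun t => riccatiSolution (K t) (L t)) l (𝓝 (riccatiSolution K₀ L₀)) := by
  have hk := hK.matrix_sqrt hK₀.posSemidef.nonneg hKn
  have hkinv : Tendsto (fun t => (CFC.sqrt (K t))⁻¹) l (𝓝 (CFC.sqrt K₀)⁻¹) :=
    (continuousAt_matrix_inv _
      (NormedRing.inverse_continuousAt (isUnit_det_sqrt hK₀).unit)).tendsto.comp hk
  have hm := ((hk.mul hL).mul hk).matrix_sqrt (sqrt_mul_mul_sqrt_nonneg K₀ hL₀)
    (hLn.mono fun t ht => sqrt_mul_mul_sqrt_nonneg (K t) ht)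
  exact (hkinv.mul hm).mul hkinv

end Matrix

theorem msqrt_eq_sqrt {r : ℕ} {x : Mat r} (hx : x.PosSemidef) : msqrt x = CFC.sqrt x := by
  rw [msqrt, dif_pos hx, CFC.sqrt_eq_real_sqrt x hx.nonneg, cfcₙ_eq_cfc, hx.1.cfc_eq]
  rfl

lemma msqrt_conj_eq_riccatiSolution {r : ℕ} {K L : Mat r} (hK : K.PosDef) (hL : 0 ≤ L) :
    (msqrt K)⁻¹ * msqrt (msqrt K * L * msqrt K) * (msqrt K)⁻¹ = riccatiSolution K L := by
  rw [msqrt_eq_sqrt hK.posSemidef, msqrt_eq_sqrt (sqrt_mul_mul_sqrt_nonneg K hL).posSemidef]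
  rfl

lemma inv_smul_sq_sub_one_of_mul_mul_eq {R A : Type*} [Field R] [Ring A] [Algebra R A]
    {Y u v : A} {α : R} (hα : α ≠ 0) (h : Y * (1 + α • u) * Y = 1 + α • v) :
    α⁻¹ • (Y ^ 2 - 1) = v - Y * u * Y := by
  have : Y ^ 2 - 1 = α • (v - Y * u * Y) := by
    rw [smul_sub, ← add_sub_cancel_left 1 (α • v), ← h]; noncomm_ring
  rw [this, inv_smul_smul₀ hα]

/-- **A limit lemma.**  For `u, z ∈ Ω₊`, let
`x̃_α = (P((u + e/α)^{1/2})(z + u + e/α))^{1/2}` and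
`x_α = (P((u + e/α)^{-1/2}) x̃_α)² - e`, where `P(y)x = y x y`.
Then `x_α / α → z` as `α → 0⁺`. -/
theorem xAlpha_div_alpha_tendsto {r : ℕ} (u z : Mat r) (hu : u.PosDef) (hz : z.PosDef)
    (xt : ℝ → Mat r)
    (hxt : xt = fun α =>
      msqrt (msqrt (u + α⁻¹ • 1) * (z + u + α⁻¹ • 1) * msqrt (u + α⁻¹ • 1)))
    (x : ℝ → Mat r)
    (hx : x = fun α =>
      ((msqrt (u + α⁻¹ • 1))⁻¹ * xt α * (msqrt (u + α⁻¹ • 1))⁻¹) ^ 2 - 1) :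
    Tendsto (fun α : ℝ => α⁻¹ • x α) (𝓝[>] 0) (𝓝 z) := by
  set K : ℝ → Mat r := fun α => 1 + α • u
  set L : ℝ → Mat r := fun α => 1 + α • (z + u)
  set Y : ℝ → Mat r := fun α => riccatiSolution (K α) (L α)
  have hK (α : ℝ) (hα : 0 ≤ α) : (K α).PosDef := posDef_one_add_smul hu.posSemidef hα
  have hL (α : ℝ) (hα : 0 ≤ α) : 0 ≤ L α :=
    (posDef_one_add_smul (hz.add hu).posSemidef hα).posSemidef.nonneg
  have hxY (α : ℝ) (hα : 0 < α) : α⁻¹ • x α = z + u - Y α * u * Y α := by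
    have hw : u + α⁻¹ • 1 = α⁻¹ • K α := by
      simp only [K, smul_add, inv_smul_smul₀ hα.ne']; abel
    have hzw : z + u + α⁻¹ • 1 = α⁻¹ • L α := by
      simp only [L, smul_add, inv_smul_smul₀ hα.ne']; abel
    have hα' := inv_pos.2 hα
    simp only [hx, hxt, hw, hzw, msqrt_conj_eq_riccatiSolution ((hK α hα.le).smul hα')
      (smul_nonneg hα'.le (hL α hα.le)), riccatiSolution_smul (hK α hα.le) (hL α hα.le) hα']
    exact inv_smul_sq_sub_one_of_mul_mul_eq hα.ne'
      (riccatiSolution_mul_mul_self (hK α hα.le) (hL α hα.le))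
  have hlin (v : Mat r) : Tendsto (fun α : ℝ => 1 + α • v) (𝓝[>] 0) (𝓝 1) :=
    ((continuous_const.add (continuous_id.smul continuous_const)).tendsto' 0 1
      (by simp)).mono_left nhdsWithin_le_nhds
  have hpos : ∀ᶠ α in 𝓝[>] (0 : ℝ), 0 ≤ α :=
    eventually_nhdsWithin_of_forall fun _ hα => le_of_lt hα
  have hY : Tendsto Y (𝓝[>] 0) (𝓝 1) := by
    simpa only [riccatiSolution_one] using (hlin u).matrix_riccatiSolution (hlin (z + u))
      PosDef.one zero_le_one (hpos.mono fun α hα => (hK α hα).posSemidef.nonneg) (hpos.mono hL)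
  refine Tendsto.congr' (eventually_nhdsWithin_of_forall fun α hα => (hxY α hα).symm) ?_
  simpa using (tendsto_const_nhds (x := z + u)).sub
    ((hY.mul (tendsto_const_nhds (x := u))).mul hY)
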